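/- Minimum dwell-time stability (Theorem 3): Let T̄ > 0 and suppose there exist ε > 0 and a bounded, continuously differentiable matrix-valued function S : [0,T̄] × 𝒫 → Sⁿ with S(τ,θ) positive definite for every (τ,θ) ∈ [0,T̄] × 𝒫, such that (i) ∂_ρ S(T̄,θ)μ + A(θ)ᵀS(T̄,θ) + S(T̄,θ)A(θ) + εIₙ ⪯ 0 for all θ ∈ 𝒫 and all μ ∈ 𝒟ᵛ, (ii) ∂_τ S(τ,θ) + ∂_ρ S(τ,θ)μ + A(θ)ᵀS(τ,θ) + S(τ,θ)A(θ) + εIₙ ⪯ 0 for all θ ∈ 𝒫, all μ ∈ 𝒟ᵛ and all τ ∈ [0,T̄], and (iii) S(0,θ) − S(T̄,η) ⪯ 0 for all θ,η ∈ 𝒫. Then for every parameter trajectory ρ with minimum dwell-time T̄ and every solution x of the LPV system ẋ(t) = A(ρ(t))x(t), one has x(t) → 0 as t → ∞. -/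

import Mathlib

attribute [local instance] Matrix.normedAddCommGroup Matrix.normedSpace

open Matrix Filter Set

open Function Topology

/-!
Along a solution, `V t = x(t)ᵀ S(τ t, ρ t) x(t)`, with the clock `τ t = min (t - t_k) T̄` restarted
at every jump time `t_k`, satisfies `V̇ ≤ -κ V` between jumps, where `κ = ε / c` and `c` bounds `S`
from above: condition (ii) applies while the clock runs and condition (i) once it has stopped at
`T̄`; both are affine in `μ`, so checking them at the vertices of `𝒟` suffices. At a jump the clock
falls from `T̄` to `0`, and condition (iii) says that this cannot increase `V`. Hence `e^{κt} V t`
is nonincreasing, and since `S` is uniformly positive definite on the compact set `[0, T̄] × 𝒫`,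
`‖x t‖² = O(e^{-κt})`.
-/

section Calculus

variable {𝕜 : Type*} [NontriviallyNormedField 𝕜] {ι m : Type*} [Fintype ι] {t : 𝕜}

theorem HasDerivAt.dotProduct {u v : 𝕜 → ι → 𝕜} {u' v' : ι → 𝕜}
    (hu : HasDerivAt u u' t) (hv : HasDerivAt v v' t) :
    HasDerivAt (fun s => u s ⬝ᵥ v s) (u' ⬝ᵥ v t + u t ⬝ᵥ v') t := by
  have := HasDerivAt.fun_sum (u := Finset.univ) fun i _ =>
    (hasDerivAt_pi.1 hu i).fun_mul (hasDerivAt_pi.1 hv i)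
  rwa [Finset.sum_add_distrib] at this

theorem HasDerivAt.mulVec {M : 𝕜 → Matrix m ι 𝕜} {M' : Matrix m ι 𝕜} {v : 𝕜 → ι → 𝕜}
    {v' : ι → 𝕜} (hM : HasDerivAt M M' t) (hv : HasDerivAt v v' t) :
    HasDerivAt (fun s => M s *ᵥ v s) (M' *ᵥ v t + M t *ᵥ v') t :=
  hasDerivAt_pi.2 fun i => (hasDerivAt_pi.1 hM i).dotProduct hv

theorem HasDerivAt.dotProduct_mulVec_of_linear {M : 𝕜 → Matrix ι ι 𝕜} {M' B : Matrix ι ι 𝕜}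
    {x : 𝕜 → ι → 𝕜} (hM : HasDerivAt M M' t) (hx : HasDerivAt x (B *ᵥ x t) t) :
    HasDerivAt (fun s => x s ⬝ᵥ M s *ᵥ x s) (x t ⬝ᵥ (M' + Bᵀ * M t + M t * B) *ᵥ x t) t := by
  convert hx.dotProduct (hM.mulVec hx) using 1
  simp only [add_mulVec, dotProduct_add, ← mulVec_mulVec, dotProduct_mulVec _ Bᵀ,
    vecMul_transpose]
  ring

end Calculus

theorem antitoneOn_exp_mul_of_hasDerivAt {D : Set ℝ} (hD : Convex ℝ D) {V V' : ℝ → ℝ} {κ : ℝ}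
    (hVc : ContinuousOn V D) (hV : ∀ u ∈ interior D, HasDerivAt V (V' u) u)
    (hV' : ∀ u ∈ interior D, V' u + κ * V u ≤ 0) :
    AntitoneOn (fun u => Real.exp (κ * u) * V u) D := by
  have hder : ∀ u ∈ interior D, HasDerivAt (fun u => Real.exp (κ * u) * V u)
      (Real.exp (κ * u) * (V' u + κ * V u)) u := fun u hu =>
    (((hasDerivAt_id' u).const_mul κ).exp.fun_mul (hV u hu)).congr_deriv (by ring)
  refine antitoneOn_of_deriv_nonpos hD ((by fun_prop : Continuous _).continuousOn.mul hVc)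
    (fun u hu => (hder u hu).differentiableAt.differentiableWithinAt) fun u hu => ?_
  rw [(hder u hu).deriv]
  exact mul_nonpos_of_nonneg_of_nonpos (Real.exp_pos _).le (hV' u hu)

section QuadraticForm

variable {ι : Type*} [Fintype ι]

theorem continuous_dotProduct_mulVec_self :
    Continuous fun z : Matrix ι ι ℝ × (ι → ℝ) => z.2 ⬝ᵥ z.1 *ᵥ z.2 := by
  fun_prop

theorem dotProduct_mulVec_self_eq_norm_sq_mul (M : Matrix ι ι ℝ) {v : ι → ℝ} (hv : v ≠ 0) :
    v ⬝ᵥ M *ᵥ v = ‖v‖ ^ 2 * ((‖v‖⁻¹ • v) ⬝ᵥ M *ᵥ (‖v‖⁻¹ • v)) := by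
  have : ‖v‖ ≠ 0 := norm_ne_zero_iff.2 hv
  simp only [mulVec_smul, dotProduct_smul, smul_dotProduct, smul_eq_mul]
  field_simp

theorem norm_sq_le_dotProduct_self (v : ι → ℝ) : ‖v‖ ^ 2 ≤ v ⬝ᵥ v := by
  have hvv : 0 ≤ v ⬝ᵥ v := Finset.sum_nonneg fun i _ => mul_self_nonneg (v i)
  refine (Real.le_sqrt (norm_nonneg v) hvv).1
    ((pi_norm_le_iff_of_nonneg (Real.sqrt_nonneg _)).2 fun i => Real.abs_le_sqrt ?_)
  simpa [sq, dotProduct] using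
    Finset.single_le_sum (fun j _ => mul_self_nonneg (v j)) (Finset.mem_univ i)

variable {α : Type*} [TopologicalSpace α] {K : Set α} {S : α → Matrix ι ι ℝ}

theorem ContinuousOn.dotProduct_mulVec_self_prod (hS : ContinuousOn S K) (B : Set (ι → ℝ)) :
    ContinuousOn (fun z : α × (ι → ℝ) => z.2 ⬝ᵥ S z.1 *ᵥ z.2) (K ×ˢ B) :=
  continuous_dotProduct_mulVec_self.comp_continuousOn
    ((hS.comp continuousOn_fst fun _ hz => hz.1).prodMk continuousOn_snd)

theorem IsCompact.exists_pos_mul_norm_sq_le_dotProduct_mulVec (hK : IsCompact K)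
    (hS : ContinuousOn S K) (hpd : ∀ p ∈ K, (S p).PosDef) :
    ∃ m > 0, ∀ p ∈ K, ∀ v, m * ‖v‖ ^ 2 ≤ v ⬝ᵥ S p *ᵥ v := by
  obtain ⟨m, hm, hmin⟩ := (hK.prod (isCompact_sphere 0 1)).exists_forall_le'
    (hS.dotProduct_mulVec_self_prod _) fun z hz =>
      (hpd z.1 hz.1).dotProduct_mulVec_pos (ne_zero_of_mem_unit_sphere ⟨z.2, hz.2⟩)
  refine ⟨m, hm, fun p hp v => ?_⟩
  rcases eq_or_ne v 0 with rfl | hv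
  · simp
  rw [dotProduct_mulVec_self_eq_norm_sq_mul _ hv, mul_comm]
  exact mul_le_mul_of_nonneg_left
    (hmin (p, _) ⟨hp, mem_sphere_zero_iff_norm.2 (norm_smul_inv_norm hv)⟩) (by positivity)

theorem IsCompact.exists_dotProduct_mulVec_le_mul_norm_sq (hK : IsCompact K)
    (hS : ContinuousOn S K) : ∃ c > 0, ∀ p ∈ K, ∀ v, v ⬝ᵥ S p *ᵥ v ≤ c * ‖v‖ ^ 2 := by
  obtain ⟨C, hC⟩ := (hK.prod (isCompact_sphere 0 1)).exists_bound_of_continuousOn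
    (hS.dotProduct_mulVec_self_prod _)
  refine ⟨max C 1, by positivity, fun p hp v => ?_⟩
  rcases eq_or_ne v 0 with rfl | hv
  · simp
  rw [dotProduct_mulVec_self_eq_norm_sq_mul _ hv, mul_comm]
  refine mul_le_mul_of_nonneg_right ?_ (by positivity)
  exact (le_abs_self _).trans <|
    (hC (p, _) ⟨hp, mem_sphere_zero_iff_norm.2 (norm_smul_inv_norm hv)⟩).trans (le_max_left C 1)

end QuadraticForm

theorem UniformContinuousOn.tendsto_sub_nhds_zero {X Y α : Type*} [UniformSpace X] [AddGroup X]
    [IsUniformAddGroup X] [UniformSpace Y] [AddGroup Y] [IsUniformAddGroup Y] {f : X → Y}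
    {K : Set X} (hf : UniformContinuousOn f K) {p q : α → X} {l : Filter α}
    (hpK : ∀ᶠ s in l, p s ∈ K) (hqK : ∀ᶠ s in l, q s ∈ K)
    (hpq : Tendsto (fun s => p s - q s) l (𝓝 0)) :
    Tendsto (fun s => f (p s) - f (q s)) l (𝓝 0) := by
  have hpair : Tendsto (fun s => (q s, p s)) l (uniformity X ⊓ 𝓟 (K ×ˢ K)) :=
    tendsto_inf.2 ⟨by rw [uniformity_eq_comap_nhds_zero X]; exact tendsto_comap_iff.2 hpq,
      tendsto_principal.2 (hqK.and hpK)⟩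
  have := Tendsto.comp hf hpair
  rw [uniformity_eq_comap_nhds_zero Y] at this
  exact tendsto_comap_iff.1 this

theorem exists_vertex_apply_ge {ι : Type*} [Fintype ι] [DecidableEq ι] {lo hi μ : ι → ℝ}
    (hμ : μ ∈ Icc lo hi) (φ : (ι → ℝ) →ₗ[ℝ] ℝ) :
    ∃ w : ι → ℝ, (∀ i, w i = lo i ∨ w i = hi i) ∧ φ μ ≤ φ w := by
  set e : ι → ι → ℝ := fun i j => if i = j then 1 else 0
  refine ⟨fun i => if 0 ≤ φ (e i) then hi i else lo i, fun i => ?_, ?_⟩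
  · by_cases h : 0 ≤ φ (e i) <;> simp [h]
  rw [LinearMap.pi_apply_eq_sum_univ φ μ, LinearMap.pi_apply_eq_sum_univ φ]
  refine Finset.sum_le_sum fun i _ => ?_
  simp only [smul_eq_mul]
  split_ifs with h
  · exact mul_le_mul_of_nonneg_right (hμ.2 i) h
  · exact mul_le_mul_of_nonpos_right (hμ.1 i) (not_le.1 h).le

theorem StrictMono.ne_of_mem_Ioo_succ {α : Type*} [Preorder α] {t : ℕ → α} (ht : StrictMono t)
    {k : ℕ} {u : α} (hu : u ∈ Ioo (t k) (t (k + 1))) (j : ℕ) : u ≠ t j := by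
  rintro rfl
  have := ht.lt_iff_lt.1 hu.1
  have := ht.lt_iff_lt.1 hu.2
  omega

theorem continuousOn_Ioc_of_continuousAt {α β : Type*} [TopologicalSpace α] [LinearOrder α]
    [TopologicalSpace β] {f : α → β} {a b : α} (hf : ∀ u ∈ Ioo a b, ContinuousAt f u)
    (hb : ContinuousWithinAt f (Iio b) b) : ContinuousOn f (Ioc a b) := by
  intro u hu
  rcases hu.2.eq_or_lt with rfl | hub
  · exact (continuousWithinAt_Iio_iff_Iic.1 hb).mono Ioc_subset_Iic_self
  · exact (hf u ⟨hu.1, hub⟩).continuousWithinAt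

section Lyapunov

variable {ι E : Type*} [Fintype ι] [NormedAddCommGroup E] {A : E → Matrix ι ι ℝ}
  {S : ℝ → E → Matrix ι ι ℝ} {κ : ℝ} {ρ ρ' : ℝ → E} {x : ℝ → ι → ℝ}

theorem exp_mul_lyapunov_le_of_jump {a b T : ℝ} {P : Set E} (hT : 0 < T) (hP : IsCompact P)
    (hS : Continuous (uncurry S)) (hρP : ∀ u ∈ Icc a b, ρ u ∈ P)
    (hjump : ∀ θ ∈ P, ∀ η ∈ P, (S T η - S 0 θ).PosSemidef)
    (hxa : ContinuousWithinAt x (Ioi a) a)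
    (hanti : AntitoneOn (fun u => Real.exp (κ * u) * (x u ⬝ᵥ S (min (u - a) T) (ρ u) *ᵥ x u))
      (Ioc a b)) {t : ℝ} (ht : t ∈ Ioc a b) :
    Real.exp (κ * t) * (x t ⬝ᵥ S (min (t - a) T) (ρ t) *ᵥ x t)
      ≤ Real.exp (κ * a) * (x a ⬝ᵥ S T (ρ a) *ᵥ x a) := by
  have hnear : Ioc a (min t (a + T)) ∈ 𝓝[>] a :=
    Ioc_mem_nhdsGT (lt_min ht.1 (lt_add_of_pos_right a hT))
  have hclock : ∀ s ∈ Ioc a (min t (a + T)), s - a ∈ Icc 0 T ∧ ρ s ∈ P := fun s hs =>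
    ⟨⟨by linarith [hs.1], by linarith [hs.2.trans (min_le_right _ _)]⟩,
      hρP s ⟨hs.1.le, hs.2.trans ((min_le_left _ _).trans ht.2)⟩⟩
  -- `ρ` need not have a right limit at `a`, so the jump condition is used at `ρ s` for `s ↓ a`;
  -- the clock offset `S (s - a) - S 0` vanishes in the limit by uniform continuity of `S`.
  have hreset : Tendsto (fun s => S (s - a) (ρ s) - S 0 (ρ s)) (𝓝[>] a) (𝓝 0) := by
    refine ((isCompact_Icc.prod hP).uniformContinuousOn_of_continuous
      hS.continuousOn).tendsto_sub_nhds_zero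
      (p := fun s => (s - a, ρ s)) (q := fun s => (0, ρ s))
      (mem_of_superset hnear fun s hs => hclock s hs)
      (mem_of_superset hnear fun s hs => ⟨⟨le_rfl, hT.le⟩, (hclock s hs).2⟩) ?_
    have : Tendsto (fun s : ℝ => ((s - a, (0 : E)) : ℝ × E)) (𝓝 a) (𝓝 0) := by
      simpa only [sub_self, Prod.mk_zero_zero] using
        ((continuous_sub_right a).tendsto a).prodMk_nhds (tendsto_const_nhds (x := (0 : E)))
    simpa only [Prod.mk_sub_mk, sub_zero, sub_self] using this.mono_left nhdsWithin_le_nhds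
  have hlim : Tendsto
      (fun s => Real.exp (κ * s) * (x s ⬝ᵥ (S T (ρ a) + (S (s - a) (ρ s) - S 0 (ρ s))) *ᵥ x s))
      (𝓝[>] a) (𝓝 (Real.exp (κ * a) * (x a ⬝ᵥ (S T (ρ a) + 0) *ᵥ x a))) :=
    (((by fun_prop : Continuous fun s => Real.exp (κ * s)).tendsto a).mono_left
      nhdsWithin_le_nhds).mul ((continuous_dotProduct_mulVec_self.tendsto _).comp
        ((tendsto_const_nhds.add hreset).prodMk_nhds hxa))
  rw [add_zero] at hlim
  refine ge_of_tendsto hlim (mem_of_superset hnear fun s hs => ?_)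
  have hst : s ≤ t := hs.2.trans (min_le_left _ _)
  refine (hanti ⟨hs.1, hst.trans ht.2⟩ ht hst).trans
    (mul_le_mul_of_nonneg_left ?_ (Real.exp_pos _).le)
  have := (hjump (ρ s) (hclock s hs).2 (ρ a) (hρP a ⟨le_rfl, (ht.1.trans_le ht.2).le⟩))
    |>.dotProduct_mulVec_nonneg (x s)
  rw [min_eq_left (hclock s hs).1.2]
  simp only [star_trivial, sub_mulVec, add_mulVec, dotProduct_sub, dotProduct_add] at this ⊢
  linarith

variable [NormedSpace ℝ E]

/-- Along `ẋ = A θ x`, with `(τ, θ)` moving at velocity `(σ, μ)`, the derivative of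
`xᵀ S(τ, θ) x` is at most `-κ xᵀ S(τ, θ) x`. -/
def DecaysAlong (A : E → Matrix ι ι ℝ) (S : ℝ → E → Matrix ι ι ℝ) (κ τ : ℝ) (θ : E) (σ : ℝ)
    (μ : E) : Prop :=
  ∀ v : ι → ℝ, v ⬝ᵥ (fderiv ℝ (uncurry S) (τ, θ) (σ, μ) + (A θ)ᵀ * S τ θ + S τ θ * A θ) *ᵥ v
    + κ * (v ⬝ᵥ S τ θ *ᵥ v) ≤ 0

theorem decaysAlong_of_forall_vertex [DecidableEq ι] {ι' : Type*} [Fintype ι'] [DecidableEq ι']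
    {A : (ι' → ℝ) → Matrix ι ι ℝ} {S : ℝ → (ι' → ℝ) → Matrix ι ι ℝ} {ε c τ σ : ℝ}
    {θ lo hi μ : ι' → ℝ} (hε : 0 ≤ ε) (hc : 0 < c)
    (hSc : ∀ v, v ⬝ᵥ S τ θ *ᵥ v ≤ c * ‖v‖ ^ 2)
    (hlmi : ∀ w : ι' → ℝ, (∀ i, w i = lo i ∨ w i = hi i) →
      (-(fderiv ℝ (uncurry S) (τ, θ) (σ, w) + (A θ)ᵀ * S τ θ + S τ θ * A θ
        + ε • (1 : Matrix ι ι ℝ))).PosSemidef)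
    (hμ : μ ∈ Icc lo hi) : DecaysAlong A S (ε / c) τ θ σ μ := by
  intro v
  have hκ : ε / c * (v ⬝ᵥ S τ θ *ᵥ v) ≤ ε * (v ⬝ᵥ v) :=
    calc ε / c * (v ⬝ᵥ S τ θ *ᵥ v) ≤ ε / c * (c * ‖v‖ ^ 2) := by gcongr; exact hSc v
      _ ≤ ε * (v ⬝ᵥ v) := by
        rw [← mul_assoc, div_mul_cancel₀ ε hc.ne']; gcongr; exact norm_sq_le_dotProduct_self v
  set D := fderiv ℝ (uncurry S) (τ, θ)
  let L := D.toLinearMap ∘ₗ LinearMap.inr ℝ ℝ (ι' → ℝ)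
  let φ : (ι' → ℝ) →ₗ[ℝ] ℝ :=
    { toFun := fun w => v ⬝ᵥ L w *ᵥ v
      map_add' := fun w w' => by simp only [map_add, add_mulVec, dotProduct_add]
      map_smul' := fun r w => by simp only [map_smul, smul_mulVec, dotProduct_smul]; rfl }
  obtain ⟨w, hw, hφ⟩ := exists_vertex_apply_ge hμ φ
  have hD : ∀ w, D (σ, w) = D (σ, 0) + L w := fun w => by
    rw [show L w = D (0, w) from rfl, ← map_add, Prod.mk_add_mk, add_zero, zero_add]
  have := (hlmi w hw).dotProduct_mulVec_nonneg v
  rw [hD] at this ⊢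
  simp only [star_trivial, neg_mulVec, dotProduct_neg, add_mulVec, dotProduct_add,
    smul_mulVec, one_mulVec, dotProduct_smul, smul_eq_mul] at this ⊢
  linarith [show v ⬝ᵥ L μ *ᵥ v ≤ v ⬝ᵥ L w *ᵥ v from hφ]

theorem antitoneOn_exp_mul_lyapunov {D : Set ℝ} (hD : Convex ℝ D) (hS : ContDiff ℝ 1 (uncurry S))
    {τ : ℝ → ℝ} {σ : ℝ} (hτc : ContinuousOn τ D) (hτ : ∀ u ∈ interior D, HasDerivAt τ σ u)
    (hρc : ContinuousOn ρ D) (hρ : ∀ u ∈ interior D, HasDerivAt ρ (ρ' u) u)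
    (hxc : ContinuousOn x D) (hx : ∀ u ∈ interior D, HasDerivAt x (A (ρ u) *ᵥ x u) u)
    (hdecay : ∀ u ∈ interior D, DecaysAlong A S κ (τ u) (ρ u) σ (ρ' u)) :
    AntitoneOn (fun u => Real.exp (κ * u) * (x u ⬝ᵥ S (τ u) (ρ u) *ᵥ x u)) D := by
  refine antitoneOn_exp_mul_of_hasDerivAt hD ?_ (fun u hu => ?_) (fun u hu => hdecay u hu (x u))
  · exact continuous_dotProduct_mulVec_self.comp_continuousOn
      ((hS.continuous.comp_continuousOn (hτc.prodMk hρc)).prodMk hxc)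
  · have hM : HasDerivAt (fun u => S (τ u) (ρ u))
        (fderiv ℝ (uncurry S) (τ u, ρ u) (σ, ρ' u)) u :=
      (hS.differentiable one_ne_zero _).hasFDerivAt.comp_hasDerivAt u
        ((hτ u hu).prodMk (hρ u hu))
    exact hM.dotProduct_mulVec_of_linear (hx u hu)

theorem antitoneOn_Ioc_exp_mul_lyapunov {a b T : ℝ} (hT : 0 < T) (hab : a + T ≤ b)
    (hS : ContDiff ℝ 1 (uncurry S)) (hρc : ContinuousOn ρ (Ioc a b))
    (hρ : ∀ u ∈ Ioo a b, HasDerivAt ρ (ρ' u) u) (hxc : ContinuousOn x (Ioc a b))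
    (hx : ∀ u ∈ Ioo a b, HasDerivAt x (A (ρ u) *ᵥ x u) u)
    (hflow : ∀ u ∈ Ioo a (a + T), DecaysAlong A S κ (u - a) (ρ u) 1 (ρ' u))
    (hflowT : ∀ u ∈ Ioo (a + T) b, DecaysAlong A S κ T (ρ u) 0 (ρ' u)) :
    AntitoneOn (fun u => Real.exp (κ * u) * (x u ⬝ᵥ S (min (u - a) T) (ρ u) *ᵥ x u))
      (Ioc a b) := by
  have haT : a < a + T := lt_add_of_pos_right a hT
  have hsub₁ : Ioc a (a + T) ⊆ Ioc a b := Ioc_subset_Ioc_right hab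
  have hsub₂ : Icc (a + T) b ⊆ Ioc a b := fun u hu => ⟨haT.trans_le hu.1, hu.2⟩
  have hint₁ : interior (Ioc a (a + T)) ⊆ Ioo a b := by
    rw [interior_Ioc]; exact Ioo_subset_Ioo_right hab
  have hint₂ : interior (Icc (a + T) b) ⊆ Ioo a b := by
    rw [interior_Icc]; exact Ioo_subset_Ioo_left haT.le
  have h₁ := antitoneOn_exp_mul_lyapunov (convex_Ioc a (a + T)) hS (τ := fun u => u - a)
    (by fun_prop) (fun u _ => (hasDerivAt_id' u).sub_const a) (hρc.mono hsub₁)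
    (fun u hu => hρ u (hint₁ hu)) (hxc.mono hsub₁) (fun u hu => hx u (hint₁ hu))
    (fun u hu => hflow u (by rwa [interior_Ioc] at hu))
  have h₂ := antitoneOn_exp_mul_lyapunov (convex_Icc (a + T) b) hS (τ := fun _ => T)
    continuousOn_const (fun u _ => hasDerivAt_const u T) (hρc.mono hsub₂)
    (fun u hu => hρ u (hint₂ hu)) (hxc.mono hsub₂) (fun u hu => hx u (hint₂ hu))
    (fun u hu => hflowT u (by rwa [interior_Icc] at hu))
  rw [← Ioc_union_Icc_eq_Ioc haT hab]
  refine (h₁.congr fun u hu => ?_).union_right (h₂.congr fun u hu => ?_) (isGreatest_Ioc haT)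
    (isLeast_Icc hab)
  · simp only [min_eq_left (by linarith [hu.2] : u - a ≤ T)]
  · simp only [min_eq_right (by linarith [hu.1] : T ≤ u - a)]

theorem exp_mul_lyapunov_le_of_dwell {a b T : ℝ} {P 𝒟 : Set E} (hT : 0 < T) (hab : a + T ≤ b)
    (hP : IsCompact P) (hS : ContDiff ℝ 1 (uncurry S))
    (hflow : ∀ τ ∈ Icc 0 T, ∀ θ ∈ P, ∀ μ ∈ 𝒟, DecaysAlong A S κ τ θ 1 μ)
    (hflowT : ∀ θ ∈ P, ∀ μ ∈ 𝒟, DecaysAlong A S κ T θ 0 μ)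
    (hjump : ∀ θ ∈ P, ∀ η ∈ P, (S T η - S 0 θ).PosSemidef)
    (hρP : ∀ u ∈ Icc a b, ρ u ∈ P) (hρb : ContinuousWithinAt ρ (Iio b) b)
    (hρ : ∀ u ∈ Ioo a b, HasDerivAt ρ (ρ' u) u ∧ ρ' u ∈ 𝒟) (hxc : ContinuousOn x (Ici a))
    (hx : ∀ u ∈ Ioo a b, HasDerivAt x (A (ρ u) *ᵥ x u) u) {t : ℝ} (ht : t ∈ Ioc a b) :
    Real.exp (κ * t) * (x t ⬝ᵥ S (min (t - a) T) (ρ t) *ᵥ x t)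
      ≤ Real.exp (κ * a) * (x a ⬝ᵥ S T (ρ a) *ᵥ x a) := by
  have hρc : ContinuousOn ρ (Ioc a b) :=
    continuousOn_Ioc_of_continuousAt (fun u hu => (hρ u hu).1.continuousAt) hρb
  have hρP' : ∀ u ∈ Ioo a b, ρ u ∈ P := fun u hu => hρP u (Ioo_subset_Icc_self hu)
  have hanti := antitoneOn_Ioc_exp_mul_lyapunov hT hab hS hρc (fun u hu => (hρ u hu).1)
    (hxc.mono fun u hu => le_of_lt hu.1) hx
    (fun u hu => hflow _ ⟨by linarith [hu.1], by linarith [hu.2]⟩ _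
      (hρP' u ⟨hu.1, hu.2.trans_le hab⟩) _ (hρ u ⟨hu.1, hu.2.trans_le hab⟩).2)
    (fun u hu => hflowT _ (hρP' u ⟨by linarith [hu.1], hu.2⟩) _
      (hρ u ⟨by linarith [hu.1], hu.2⟩).2)
  exact exp_mul_lyapunov_le_of_jump hT hP hS.continuous hρP hjump
    ((hxc a self_mem_Ici).mono Ioi_subset_Ici_self) hanti ht

end Lyapunov

theorem tendsto_zero_of_norm_sq_le_mul_exp {F : Type*} [NormedAddCommGroup F] {x : ℝ → F}
    {κ C : ℝ} (hκ : 0 < κ) (h : ∀ᶠ t in atTop, ‖x t‖ ^ 2 ≤ C * Real.exp (-(κ * t))) :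
    Tendsto x atTop (𝓝 0) := by
  have hlim : Tendsto (fun t => √(C * Real.exp (-(κ * t)))) atTop (𝓝 0) := by
    simpa using ((Real.tendsto_exp_neg_atTop_nhds_zero.comp
      (tendsto_id.const_mul_atTop hκ)).const_mul C).sqrt
  exact tendsto_zero_iff_norm_tendsto_zero.2 (squeeze_zero' (.of_forall fun t => norm_nonneg _)
    (h.mono fun t ht => by simpa using Real.abs_le_sqrt ht) hlim)

theorem tendsto_zero_of_dwell_chain {F : Type*} [NormedAddCommGroup F] {x : ℝ → F}
    {tk : ℕ → ℝ} (hmono : StrictMono tk) (hlim : Tendsto tk atTop atTop)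
    {V : ℕ → ℝ → ℝ} {g : ℝ → ℝ} {κ m : ℝ} (hκ : 0 < κ) (hm : 0 < m)
    (hV : ∀ k, ∀ t ∈ Ioc (tk k) (tk (k + 1)), Real.exp (κ * t) * V k t ≤ g (tk k))
    (hVg : ∀ k, Real.exp (κ * tk (k + 1)) * V k (tk (k + 1)) = g (tk (k + 1)))
    (hxV : ∀ k, ∀ t ∈ Ioc (tk k) (tk (k + 1)), m * ‖x t‖ ^ 2 ≤ V k t) :
    Tendsto x atTop (𝓝 0) := by
  have hg : ∀ k, g (tk k) ≤ g (tk 0) := by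
    intro k
    induction k with
    | zero => rfl
    | succ k ih => exact (hVg k ▸ hV k _ ⟨hmono k.lt_succ_self, le_rfl⟩).trans ih
  refine tendsto_zero_of_norm_sq_le_mul_exp hκ (C := g (tk 0) / m) ?_
  filter_upwards [eventually_gt_atTop (tk 0)] with t ht
  obtain ⟨k, hk⟩ := hmono.exists_between_of_tendsto_atTop hlim ht
  calc ‖x t‖ ^ 2 = Real.exp (κ * t) * (m * ‖x t‖ ^ 2) / m * Real.exp (-(κ * t)) := by
        rw [Real.exp_neg]; field_simp
    _ ≤ g (tk 0) / m * Real.exp (-(κ * t)) := by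
        gcongr
        exact (mul_le_mul_of_nonneg_left (hxV k t hk) (Real.exp_pos _).le).trans
          ((hV k t hk).trans (hg k))

theorem minimum_dwell_time_stability_general
    {n N : ℕ}
    -- the parameter box 𝒫 = [ρlo, ρhi] and the derivative box 𝒟 = [νlo, νhi]
    (ρlo ρhi νlo νhi : Fin N → ℝ)
    -- the system matrix, continuous (hence bounded) on the compact box 𝒫
    (A : (Fin N → ℝ) → Matrix (Fin n) (Fin n) ℝ)
    -- the minimum dwell-time
    (T : ℝ) (hT : 0 < T)
    -- the Lyapunov certificate
    (ε : ℝ) (hε : 0 < ε)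
    (S : ℝ → (Fin N → ℝ) → Matrix (Fin n) (Fin n) ℝ)
    (hS_c1 : ContDiff ℝ 1 (fun p : ℝ × (Fin N → ℝ) => S p.1 p.2))
    (hS_pd : ∀ τ ∈ Icc (0 : ℝ) T, ∀ θ ∈ Icc ρlo ρhi, (S τ θ).PosDef)
    -- condition (i): ∂_ρ S(T̄,θ)μ + A(θ)ᵀS(T̄,θ) + S(T̄,θ)A(θ) + εI ⪯ 0 on 𝒫 × 𝒟ᵛ
    (hflowT : ∀ θ ∈ Icc ρlo ρhi,
      ∀ μ : Fin N → ℝ, (∀ i, μ i = νlo i ∨ μ i = νhi i) →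
      (-(fderiv ℝ (fun p : ℝ × (Fin N → ℝ) => S p.1 p.2) (T, θ) (0, μ)
          + (A θ)ᵀ * S T θ + S T θ * A θ
          + ε • (1 : Matrix (Fin n) (Fin n) ℝ))).PosSemidef)
    -- condition (ii): ∂_τ S + ∂_ρ S μ + AᵀS + SA + εI ⪯ 0 on [0,T̄] × 𝒫 × 𝒟ᵛ
    (hflow : ∀ τ ∈ Icc (0 : ℝ) T, ∀ θ ∈ Icc ρlo ρhi,
      ∀ μ : Fin N → ℝ, (∀ i, μ i = νlo i ∨ μ i = νhi i) →
      (-(fderiv ℝ (fun p : ℝ × (Fin N → ℝ) => S p.1 p.2) (τ, θ) (1, 0)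
          + fderiv ℝ (fun p : ℝ × (Fin N → ℝ) => S p.1 p.2) (τ, θ) (0, μ)
          + (A θ)ᵀ * S τ θ + S τ θ * A θ
          + ε • (1 : Matrix (Fin n) (Fin n) ℝ))).PosSemidef)
    -- condition (iii): S(0,θ) − S(T̄,η) ⪯ 0 on 𝒫 × 𝒫
    (hjump : ∀ θ ∈ Icc ρlo ρhi, ∀ η ∈ Icc ρlo ρhi, (S T η - S 0 θ).PosSemidef)
    -- a parameter trajectory with minimum dwell-time T̄: jump times 0 = t₀ < t₁ < …,
    -- t_{k+1} − t_k ≥ T̄, t_k → ∞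
    (tk : ℕ → ℝ) (htk0 : tk 0 = 0) (htkmono : StrictMono tk)
    (htkdwell : ∀ k : ℕ, T ≤ tk (k + 1) - tk k)
    (htk_lim : Tendsto tk atTop atTop)
    (ρ ρ' : ℝ → Fin N → ℝ)
    (hρP : ∀ t ≥ (0 : ℝ), ρ t ∈ Icc ρlo ρhi)
    (hρleft : ∀ t > (0 : ℝ), Tendsto ρ (nhdsWithin t (Iio t)) (nhds (ρ t)))
    (hρdiff : ∀ k : ℕ, ∀ t ∈ Ioo (tk k) (tk (k + 1)),
      HasDerivAt ρ (ρ' t) t ∧ ρ' t ∈ Icc νlo νhi)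
    -- a solution of the LPV system
    (x : ℝ → Fin n → ℝ)
    (hxcont : ContinuousOn x (Ici 0))
    (hxdiff : ∀ t ≥ (0 : ℝ), (∀ k : ℕ, 1 ≤ k → t ≠ tk k) →
      HasDerivWithinAt x ((A (ρ t)).mulVec (x t)) (Ici 0) t) :
    Tendsto x atTop (nhds 0) := by
  have hK : IsCompact (Icc (0 : ℝ) T ×ˢ Icc ρlo ρhi) := isCompact_Icc.prod isCompact_Icc
  obtain ⟨c, hc, hSc⟩ := hK.exists_dotProduct_mulVec_le_mul_norm_sq hS_c1.continuous.continuousOn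
  obtain ⟨m, hm, hSm⟩ := hK.exists_pos_mul_norm_sq_le_dotProduct_mulVec
    hS_c1.continuous.continuousOn fun p hp => hS_pd _ hp.1 _ hp.2
  have hdecay : ∀ τ ∈ Icc 0 T, ∀ θ ∈ Icc ρlo ρhi, ∀ μ ∈ Icc νlo νhi,
      DecaysAlong A S (ε / c) τ θ 1 μ := fun τ hτ θ hθ μ hμ =>
    decaysAlong_of_forall_vertex hε.le hc (hSc (τ, θ) ⟨hτ, hθ⟩) (fun w hw => by
      have := hflow τ hτ θ hθ w hw
      rwa [← map_add, Prod.mk_add_mk, add_zero, zero_add] at this) hμ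
  have hdecayT : ∀ θ ∈ Icc ρlo ρhi, ∀ μ ∈ Icc νlo νhi, DecaysAlong A S (ε / c) T θ 0 μ :=
    fun θ hθ μ hμ => decaysAlong_of_forall_vertex hε.le hc (hSc (T, θ) ⟨⟨hT.le, le_rfl⟩, hθ⟩)
      (hflowT θ hθ) hμ
  have htk_nonneg : ∀ k, 0 ≤ tk k := fun k => htk0 ▸ htkmono.monotone k.zero_le
  set V : ℕ → ℝ → ℝ := fun k t => x t ⬝ᵥ S (min (t - tk k) T) (ρ t) *ᵥ x t
  set g : ℝ → ℝ := fun s => Real.exp (ε / c * s) * (x s ⬝ᵥ S T (ρ s) *ᵥ x s)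
  have hVg : ∀ k, Real.exp (ε / c * tk (k + 1)) * V k (tk (k + 1)) = g (tk (k + 1)) := fun k => by
    simp only [V, g, min_eq_right (htkdwell k)]
  have hxV : ∀ k, ∀ t ∈ Ioc (tk k) (tk (k + 1)), m * ‖x t‖ ^ 2 ≤ V k t := fun k t ht =>
    hSm (_, _) ⟨⟨le_min (sub_nonneg.2 ht.1.le) hT.le, min_le_right _ _⟩,
      hρP t ((htk_nonneg k).trans ht.1.le)⟩ (x t)
  refine tendsto_zero_of_dwell_chain htkmono htk_lim (div_pos hε hc) hm (fun k t ht => ?_) hVg hxV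
  refine exp_mul_lyapunov_le_of_dwell hT (by linarith [htkdwell k]) isCompact_Icc hS_c1 hdecay
    hdecayT hjump (fun u hu => hρP u ((htk_nonneg k).trans hu.1))
    (hρleft _ ((htk_nonneg k).trans_lt (htkmono k.lt_succ_self))) (hρdiff k)
    (hxcont.mono (Ici_subset_Ici.2 (htk_nonneg k))) (fun u hu => ?_) ht
  have hu0 : 0 < u := (htk_nonneg k).trans_lt hu.1
  exact (hxdiff u hu0.le fun j _ => htkmono.ne_of_mem_Ioo_succ hu j).hasDerivAt (Ici_mem_nhds hu0)

theorem minimum_dwell_time_stability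
    {n N : ℕ}
    -- the parameter box 𝒫 = [ρlo, ρhi] and the derivative box 𝒟 = [νlo, νhi]
    (ρlo ρhi νlo νhi : Fin N → ℝ)
    (hbox : ρlo ≤ ρhi) (hνbox : νlo ≤ νhi)
    -- the system matrix, continuous (hence bounded) on the compact box 𝒫
    (A : (Fin N → ℝ) → Matrix (Fin n) (Fin n) ℝ)
    (hA : ContinuousOn A (Icc ρlo ρhi))
    -- the minimum dwell-time
    (T : ℝ) (hT : 0 < T)
    -- the Lyapunov certificate
    (ε : ℝ) (hε : 0 < ε)
    (S : ℝ → (Fin N → ℝ) → Matrix (Fin n) (Fin n) ℝ)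
    (hS_c1 : ContDiff ℝ 1 (fun p : ℝ × (Fin N → ℝ) => S p.1 p.2))
    (hS_symm : ∀ τ θ, (S τ θ).IsSymm)
    (hS_pd : ∀ τ ∈ Icc (0 : ℝ) T, ∀ θ ∈ Icc ρlo ρhi, (S τ θ).PosDef)
    -- condition (i): ∂_ρ S(T̄,θ)μ + A(θ)ᵀS(T̄,θ) + S(T̄,θ)A(θ) + εI ⪯ 0 on 𝒫 × 𝒟ᵛ
    (hflowT : ∀ θ ∈ Icc ρlo ρhi,
      ∀ μ : Fin N → ℝ, (∀ i, μ i = νlo i ∨ μ i = νhi i) →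
      (-(fderiv ℝ (fun p : ℝ × (Fin N → ℝ) => S p.1 p.2) (T, θ) (0, μ)
          + (A θ)ᵀ * S T θ + S T θ * A θ
          + ε • (1 : Matrix (Fin n) (Fin n) ℝ))).PosSemidef)
    -- condition (ii): ∂_τ S + ∂_ρ S μ + AᵀS + SA + εI ⪯ 0 on [0,T̄] × 𝒫 × 𝒟ᵛ
    (hflow : ∀ τ ∈ Icc (0 : ℝ) T, ∀ θ ∈ Icc ρlo ρhi,
      ∀ μ : Fin N → ℝ, (∀ i, μ i = νlo i ∨ μ i = νhi i) →
      (-(fderiv ℝ (fun p : ℝ × (Fin N → ℝ) => S p.1 p.2) (τ, θ) (1, 0)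
          + fderiv ℝ (fun p : ℝ × (Fin N → ℝ) => S p.1 p.2) (τ, θ) (0, μ)
          + (A θ)ᵀ * S τ θ + S τ θ * A θ
          + ε • (1 : Matrix (Fin n) (Fin n) ℝ))).PosSemidef)
    -- condition (iii): S(0,θ) − S(T̄,η) ⪯ 0 on 𝒫 × 𝒫
    (hjump : ∀ θ ∈ Icc ρlo ρhi, ∀ η ∈ Icc ρlo ρhi, (S T η - S 0 θ).PosSemidef)
    -- a parameter trajectory with minimum dwell-time T̄: jump times 0 = t₀ < t₁ < …,
    -- t_{k+1} − t_k ≥ T̄, t_k → ∞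
    (tk : ℕ → ℝ) (htk0 : tk 0 = 0) (htkmono : StrictMono tk)
    (htkdwell : ∀ k : ℕ, T ≤ tk (k + 1) - tk k)
    (htk_lim : Tendsto tk atTop atTop)
    (ρ ρ' : ℝ → Fin N → ℝ)
    (hρP : ∀ t ≥ (0 : ℝ), ρ t ∈ Icc ρlo ρhi)
    (hρleft : ∀ t > (0 : ℝ), Tendsto ρ (nhdsWithin t (Iio t)) (nhds (ρ t)))
    (hρdiff : ∀ k : ℕ, ∀ t ∈ Ioo (tk k) (tk (k + 1)),
      HasDerivAt ρ (ρ' t) t ∧ ρ' t ∈ Icc νlo νhi)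
    -- a solution of the LPV system
    (x : ℝ → Fin n → ℝ)
    (hxcont : ContinuousOn x (Ici 0))
    (hxdiff : ∀ t ≥ (0 : ℝ), (∀ k : ℕ, 1 ≤ k → t ≠ tk k) →
      HasDerivWithinAt x ((A (ρ t)).mulVec (x t)) (Ici 0) t) :
    Tendsto x atTop (nhds 0) :=
  minimum_dwell_time_stability_general ρlo ρhi νlo νhi A T hT ε hε S hS_c1 hS_pd hflowT hflow hjump
    tk htk0 htkmono htkdwell htk_lim ρ ρ' hρP hρleft hρdiff x hxcont hxdiff
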